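/- arXiv:1607.03557 — 5 statements merged into one kernel-verified Lean document; each statement's English description precedes it below -/
import Mathlib

section
/- Let A_• be an inverse sequence of abelian groups ⋯ → A_2 → A_1 → A_0 where each structure map A_n → A_{n-1} is surjective but not injective. Let B_n = ⊕_{k∈ℕ} A_n (countably infinite direct sum), with induced maps B_n → B_{n-1}. Then the natural map ⊕_{k∈ℕ} (lim_n A_n) → lim_n (⊕_{k∈ℕ} A_n) is not surjective. -/
/-!
Choose `a k ∈ ker (A (k+1) → A k)` nonzero and lift it, using surjectivity, to a thread `t k`
of the inverse system vanishing in degrees `≤ k`. In degree `n` only the threads `t k` with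
`k < n` are nonzero, so `y n := (t k n)_k` is a finitely supported family and `y` is a
thread of direct sums. A preimage `c` would have finite support, so for some `k` the
component `c k` vanishes, while `y (k + 1)` has component `a k ≠ 0` at `k`.
-/

section Thread

variable {A : ℕ → Type*}

noncomputable def threadFrom [∀ n, Zero (A n)] (g : ∀ n, A n → A (n + 1)) (k : ℕ)
    (a : A (k + 1)) : ∀ n, A n
  | 0 => 0
  | n + 1 => if h : n = k then h ▸ a else if n < k then 0 else g n (threadFrom g k a n)

variable [∀ n, Zero (A n)] (g : ∀ n, A n → A (n + 1)) (k : ℕ) (a : A (k + 1))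

theorem threadFrom_of_le : ∀ n ≤ k, threadFrom g k a n = 0
  | 0, _ => rfl
  | n + 1, h => by rw [threadFrom, dif_neg (by omega), if_pos (by omega)]

theorem threadFrom_succ_self : threadFrom g k a (k + 1) = a := by
  rw [threadFrom, dif_pos rfl]

theorem threadFrom_succ_of_lt {n : ℕ} (h : k < n) :
    threadFrom g k a (n + 1) = g n (threadFrom g k a n) := by
  rw [threadFrom, dif_neg (by omega), if_neg (by omega)]

end Thread

theorem exists_thread_of_map_eq_zero {A : ℕ → Type*} [∀ n, AddZeroClass (A n)]
    (f : ∀ n, A (n + 1) →+ A n) (hsurj : ∀ n, Function.Surjective (f n))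
    (k : ℕ) (a : A (k + 1)) (ha : f k a = 0) :
    ∃ t : ∀ n, A n, (∀ n, f n (t (n + 1)) = t n) ∧ (∀ n ≤ k, t n = 0) ∧ t (k + 1) = a := by
  let g n := Function.surjInv (hsurj n)
  refine ⟨threadFrom g k a, fun n => ?_, threadFrom_of_le g k a, threadFrom_succ_self g k a⟩
  rcases lt_trichotomy n k with h | rfl | h
  · rw [threadFrom_of_le g k a _ h, threadFrom_of_le g k a _ h.le, map_zero]
  · rw [threadFrom_succ_self, threadFrom_of_le g n a n le_rfl, ha]
  · rw [threadFrom_succ_of_lt g k a h, Function.surjInv_eq (hsurj n)]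

theorem not_exists_finsupp_mapRange_eval_eq {ι : Type*} [Infinite ι] {A : ℕ → Type*}
    [∀ n, Zero (A n)] (y : ∀ n, ι →₀ A n) (ν : ι → ℕ) (hy : ∀ i, y (ν i) i ≠ 0) :
    ¬ ∃ c : ι →₀ (∀ n, A n), ∀ n, c.mapRange (fun x => x n) rfl = y n := by
  rintro ⟨c, hc⟩
  obtain ⟨i, hi⟩ := c.support.exists_notMem
  apply hy i
  rw [← hc, Finsupp.mapRange_apply, Finsupp.notMem_support_iff.mp hi, Pi.zero_apply]

/-- For an inverse sequence of abelian groups with surjective,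
non-injective structure maps, the natural map
`⊕_{k∈ℕ} (lim_n A_n) → lim_n (⊕_{k∈ℕ} A_n)` is not surjective. -/
theorem stmt0 (A : ℕ → Type*) [∀ n, AddCommGroup (A n)]
    (f : ∀ n, A (n + 1) →+ A n)
    (hsurj : ∀ n, Function.Surjective (f n))
    (hninj : ∀ n, ¬ Function.Injective (f n)) :
    ∃ y : ∀ n, ℕ →₀ A n,
      (∀ n, (y (n + 1)).mapRange (f n) (map_zero _) = y n) ∧
      ¬ ∃ c : ℕ →₀ (∀ n, A n),
          (∀ k n, f n (c k (n + 1)) = c k n) ∧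
          ∀ n, c.mapRange (fun x => x n) rfl = y n := by
  have hker : ∀ k, ∃ a : A (k + 1), f k a = 0 ∧ a ≠ 0 := fun k => by
    simpa [injective_iff_map_eq_zero] using hninj k
  choose a ha_ker ha_ne using hker
  choose t ht_compat ht_zero ht_self using
    fun k => exists_thread_of_map_eq_zero f hsurj k (a k) (ha_ker k)
  let y n : ℕ →₀ A n := Finsupp.onFinset (Finset.range n) (fun k => t k n) fun k hk => by
    by_contra hkn
    exact hk (ht_zero k n (by simpa using hkn))
  refine ⟨y, fun n => ?_, fun ⟨c, _, hc⟩ => ?_⟩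
  · ext k
    simp [y, ht_compat]
  · refine not_exists_finsupp_mapRange_eval_eq y (· + 1) (fun k => ?_) ⟨c, hc⟩
    simpa [y, ht_self] using ha_ne k
end

section
/- The group G = ℤ/pℤ ⊕ ℤ (p prime) contains infinitely many distinct maximal infinite cyclic subgroups; explicitly, the subgroups C(i, p^r) generated by (i, p^r) for i ∈ ℤ/pℤ \ {0} and r ≥ 0 are pairwise distinct and each is maximal among infinite cyclic subgroups of G. -/
/-!
If `(i, p^r) = n • g` then `n ∣ p^r`, while `n • g.1 = i ≠ 0` in `ZMod p` forces `p ∤ n`;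
so `n = ±1` and `g` lies in the cyclic group generated by `(i, p^r)`, which is therefore maximal.
Distinct pairs `(i, r)` give distinct subgroups because a cyclic subgroup of `A × ℤ` has at most
one generator with positive second coordinate.
-/

/-- A maximal infinite cyclic subgroup of an additive group. -/
def IsMaxInfCyclic {G : Type*} [AddGroup G] (C : AddSubgroup G) : Prop :=
  (∃ g, C = AddSubgroup.zmultiples g) ∧ (C : Set G).Infinite ∧
    ∀ D : AddSubgroup G, (∃ g, D = AddSubgroup.zmultiples g) →
      (D : Set G).Infinite → C ≤ D → C = D

open AddSubgroup

theorem isUnit_of_dvd_pow_of_not_dvd {M : Type*} [CommMonoidWithZero M] [IsCancelMulZero M]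
    {p n : M} (hp : Prime p) {r : ℕ} (hdvd : n ∣ p ^ r) (hn : ¬p ∣ n) : IsUnit n := by
  obtain ⟨k, -, hk⟩ := (dvd_prime_pow hp r).1 hdvd
  cases k with
  | zero => simpa using hk
  | succ k => exact absurd ((dvd_pow_self p k.succ_ne_zero).trans hk.symm.dvd) hn

theorem mem_zmultiples_of_isUnit_zsmul_eq {G : Type*} [AddGroup G] {n : ℤ} (hn : IsUnit n)
    {g x : G} (h : n • g = x) : g ∈ zmultiples x :=
  ⟨n, by simp only [← h, ← mul_zsmul', Int.isUnit_mul_self hn, one_zsmul]⟩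

theorem isMaxInfCyclic_zmultiples {G : Type*} [AddGroup G] {x : G}
    (hinf : (zmultiples x : Set G).Infinite)
    (hmax : ∀ g : G, x ∈ zmultiples g → g ∈ zmultiples x) :
    IsMaxInfCyclic (zmultiples x) := by
  refine ⟨⟨x, rfl⟩, hinf, ?_⟩
  rintro _ ⟨g, rfl⟩ - hle
  exact le_antisymm hle (zmultiples_le.2 (hmax g (hle (mem_zmultiples x))))

theorem infinite_zmultiples_of_snd_ne_zero {A B : Type*} [AddGroup A] [AddGroup B]
    [IsAddTorsionFree B] {x : A × B} (hx : x.2 ≠ 0) : (zmultiples x : Set (A × B)).Infinite :=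
  infinite_zmultiples.2 fun h ↦ not_isOfFinAddOrder_of_isAddTorsionFree hx h.snd

theorem Prod.eq_of_zmultiples_eq_of_snd_pos {A : Type*} [AddGroup A] {x y : A × ℤ}
    (hx : 0 < x.2) (hy : 0 < y.2) (h : zmultiples x = zmultiples y) : x = y := by
  obtain ⟨n, hn⟩ := mem_zmultiples_iff.1 (h ▸ mem_zmultiples x)
  obtain ⟨m, hm⟩ := mem_zmultiples_iff.1 (h ▸ mem_zmultiples y)
  have hny : n * y.2 = x.2 := by simpa using congrArg Prod.snd hn
  have hmx : m * x.2 = y.2 := by simpa using congrArg Prod.snd hm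
  have hnm : n * m = 1 := mul_right_cancel₀ hx.ne' (by rw [one_mul, mul_assoc, hmx, hny])
  have hn_pos : 0 < n := pos_of_mul_pos_left (hny ▸ hx) hy.le
  rw [← hn, Int.eq_one_of_mul_eq_one_right hn_pos.le hnm, one_zsmul]

theorem mem_zmultiples_of_mk_prime_pow_mem_zmultiples {p : ℕ} [Fact p.Prime] {i : ZMod p}
    (hi : i ≠ 0) (r : ℕ) {g : ZMod p × ℤ}
    (h : ((i, (p : ℤ) ^ r) : ZMod p × ℤ) ∈ zmultiples g) :
    g ∈ zmultiples ((i, (p : ℤ) ^ r) : ZMod p × ℤ) := by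
  obtain ⟨n, hn⟩ := mem_zmultiples_iff.1 h
  have hdvd : n ∣ (p : ℤ) ^ r := ⟨g.2, by simpa using (congrArg Prod.snd hn).symm⟩
  have hndvd : ¬(p : ℤ) ∣ n := by
    intro hpn
    have hi' : n • g.1 = i := congrArg Prod.fst hn
    rw [zsmul_eq_mul, (ZMod.intCast_zmod_eq_zero_iff_dvd n p).2 hpn, zero_mul] at hi'
    exact hi hi'.symm
  exact mem_zmultiples_of_isUnit_zsmul_eq
    (isUnit_of_dvd_pow_of_not_dvd (Nat.prime_iff_prime_int.1 Fact.out) hdvd hndvd) hn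

/-- In `G = ℤ/pℤ × ℤ` the subgroups `C(i, p^r)` for `i ≠ 0`,
`r ≥ 0` are pairwise distinct maximal infinite cyclic subgroups; in particular
`G` has infinitely many maximal infinite cyclic subgroups. -/
theorem stmt2 (p : ℕ) (hp : p.Prime) :
    (Function.Injective fun x : {i : ZMod p // i ≠ 0} × ℕ =>
        AddSubgroup.zmultiples ((x.1.1, (p : ℤ) ^ x.2) : ZMod p × ℤ)) ∧
    (∀ i : ZMod p, i ≠ 0 → ∀ r : ℕ,
        IsMaxInfCyclic (AddSubgroup.zmultiples ((i, (p : ℤ) ^ r) : ZMod p × ℤ))) ∧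
    {C : AddSubgroup (ZMod p × ℤ) | IsMaxInfCyclic C}.Infinite := by
  have : Fact p.Prime := ⟨hp⟩
  have hp_pos : (0 : ℤ) < p := by exact_mod_cast hp.pos
  have hpow_pos (r : ℕ) : 0 < (p : ℤ) ^ r := pow_pos hp_pos r
  have hinj : Function.Injective fun x : {i : ZMod p // i ≠ 0} × ℕ =>
      zmultiples ((x.1.1, (p : ℤ) ^ x.2) : ZMod p × ℤ) := by
    rintro ⟨⟨i, hi⟩, r⟩ ⟨⟨j, _⟩, s⟩ h
    obtain ⟨rfl, hrs⟩ :=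
      Prod.mk.inj (Prod.eq_of_zmultiples_eq_of_snd_pos (hpow_pos r) (hpow_pos s) h)
    rw [pow_right_injective₀ hp_pos (by exact_mod_cast hp.ne_one) hrs]
  have hmax (i : ZMod p) (hi : i ≠ 0) (r : ℕ) :
      IsMaxInfCyclic (zmultiples ((i, (p : ℤ) ^ r) : ZMod p × ℤ)) :=
    isMaxInfCyclic_zmultiples (infinite_zmultiples_of_snd_ne_zero (hpow_pos r).ne')
      fun _ ↦ mem_zmultiples_of_mk_prime_pow_mem_zmultiples hi r
  have : Nonempty {i : ZMod p // i ≠ 0} := ⟨⟨1, one_ne_zero⟩⟩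
  exact ⟨hinj, hmax, Set.infinite_of_injective_forall_mem hinj fun x ↦ hmax _ x.1.2 _⟩
end

section
/- Every infinite cyclic subgroup of G = ℤ/pℤ ⊕ ℤ is contained in a maximal infinite cyclic subgroup, and the maximal infinite cyclic subgroups are exactly C(0,1) together with the C(i,p^r) for i ≠ 0 in ℤ/pℤ and r ≥ 0. -/
open AddSubgroup

theorem zmultiples_prod_infinite_iff {G H : Type*} [AddGroup G] [Finite G] [AddGroup H]
    [IsAddTorsionFree H] (a : G × H) :
    ((zmultiples a : AddSubgroup (G × H)) : Set (G × H)).Infinite ↔ a.2 ≠ 0 := by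
  rw [infinite_zmultiples, IsOfFinAddOrder.prod_iff, isOfFinAddOrder_iff_eq_zero a.2]
  simp [isOfFinAddOrder_of_finite]

theorem isMaxInfCyclic_zmultiples_s3 {G : Type*} [AddGroup G] {a : G}
    (ha : ((zmultiples a : AddSubgroup G) : Set G).Infinite)
    (hprim : ∀ (k : ℤ) (b : G), k • b = a → IsUnit k) :
    IsMaxInfCyclic (zmultiples a) := by
  refine ⟨⟨a, rfl⟩, ha, ?_⟩
  rintro D ⟨b, rfl⟩ - hle
  obtain ⟨k, hk⟩ := mem_zmultiples_iff.mp (hle (mem_zmultiples a))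
  refine le_antisymm hle (zmultiples_le.mpr (mem_zmultiples_iff.mpr ⟨k, ?_⟩))
  rw [← hk, smul_smul, Int.isUnit_mul_self (hprim k b hk), one_smul]

theorem isUnit_of_zsmul_eq_mk_one {G : Type*} [AddGroup G] {k : ℤ} {b : G × ℤ} {x : G}
    (h : k • b = (x, 1)) : IsUnit k :=
  IsUnit.of_mul_eq_one b.2 (congrArg Prod.snd h)

theorem isUnit_of_zsmul_eq_mk_prime_pow {p : ℕ} (hp : p.Prime) {i : ZMod p} (hi : i ≠ 0)
    (r : ℕ) {k : ℤ} {b : ZMod p × ℤ} (h : k • b = (i, (p : ℤ) ^ r)) : IsUnit k := by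
  have hfst : (k : ZMod p) * b.1 = i := by
    rw [← zsmul_eq_mul]
    exact congrArg Prod.fst h
  have hsnd : k * b.2 = (p : ℤ) ^ r := congrArg Prod.snd h
  have hpk : ¬ (p : ℤ) ∣ k := by
    rw [← ZMod.intCast_zmod_eq_zero_iff_dvd]
    rintro hk0
    exact hi (by rw [← hfst, hk0, zero_mul])
  have hcop : IsCoprime k ((p : ℤ) ^ r) :=
    ((Prime.coprime_iff_not_dvd (Nat.prime_iff_prime_int.mp hp)).mpr hpk).symm.pow_right
  exact hcop.isUnit_of_dvd' dvd_rfl ⟨b.2, hsnd.symm⟩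

def IsStandardCyclic (p : ℕ) (S : AddSubgroup (ZMod p × ℤ)) : Prop :=
  S = AddSubgroup.zmultiples ((0, 1) : ZMod p × ℤ) ∨
    ∃ i : ZMod p, i ≠ 0 ∧ ∃ r : ℕ,
      S = AddSubgroup.zmultiples ((i, (p : ℤ) ^ r) : ZMod p × ℤ)

theorem IsStandardCyclic.isMaxInfCyclic {p : ℕ} (hp : p.Prime) {S : AddSubgroup (ZMod p × ℤ)}
    (hS : IsStandardCyclic p S) : IsMaxInfCyclic S := by
  have : NeZero p := ⟨hp.ne_zero⟩
  rcases hS with rfl | ⟨i, hi, r, rfl⟩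
  · exact isMaxInfCyclic_zmultiples_s3 ((zmultiples_prod_infinite_iff _).mpr one_ne_zero)
      fun _ _ ↦ isUnit_of_zsmul_eq_mk_one
  · exact isMaxInfCyclic_zmultiples_s3
      ((zmultiples_prod_infinite_iff _).mpr (pow_ne_zero r (Int.natCast_ne_zero.mpr hp.ne_zero)))
      fun _ _ ↦ isUnit_of_zsmul_eq_mk_prime_pow hp hi r

theorem exists_isStandardCyclic_le {p : ℕ} (hp : p.Prime) {a : ZMod p × ℤ}
    (hinf : ((zmultiples a : AddSubgroup (ZMod p × ℤ)) : Set (ZMod p × ℤ)).Infinite) :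
    ∃ S, IsStandardCyclic p S ∧ zmultiples a ≤ S := by
  have : Fact p.Prime := ⟨hp⟩
  have ha : a.2 ≠ 0 := (zmultiples_prod_infinite_iff a).mp hinf
  by_cases hx : a.1 = 0
  · refine ⟨_, Or.inl rfl, zmultiples_le.mpr (mem_zmultiples_iff.mpr ⟨a.2, ?_⟩)⟩
    ext <;> simp [hx]
  obtain ⟨r, m, hpm, hm⟩ :=
    WfDvdMonoid.max_power_factor ha (Nat.prime_iff_prime_int.mp hp).irreducible
  have hm0 : (m : ZMod p) ≠ 0 := by rwa [Ne, ZMod.intCast_zmod_eq_zero_iff_dvd]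
  refine ⟨_, Or.inr ⟨(m : ZMod p)⁻¹ * a.1, mul_ne_zero (inv_ne_zero hm0) hx, r, rfl⟩,
    zmultiples_le.mpr (mem_zmultiples_iff.mpr ⟨m, ?_⟩)⟩
  ext
  · simp [hm0]
  · simp [hm, mul_comm]

/-- every infinite cyclic subgroup of `ℤ/pℤ × ℤ` is contained in
a maximal infinite cyclic subgroup, and the maximal infinite cyclic subgroups
are exactly `C(0,1)` together with the `C(i, p^r)` for `i ≠ 0`, `r ≥ 0`. -/
theorem stmt3 (p : ℕ) (hp : p.Prime) :
    (∀ C : AddSubgroup (ZMod p × ℤ), (∃ g, C = AddSubgroup.zmultiples g) →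
      (C : Set (ZMod p × ℤ)).Infinite → ∃ D, IsMaxInfCyclic D ∧ C ≤ D) ∧
    (∀ S : AddSubgroup (ZMod p × ℤ), IsMaxInfCyclic S ↔
      S = AddSubgroup.zmultiples ((0, 1) : ZMod p × ℤ) ∨
      ∃ i : ZMod p, i ≠ 0 ∧ ∃ r : ℕ,
        S = AddSubgroup.zmultiples ((i, (p : ℤ) ^ r) : ZMod p × ℤ)) := by
  refine ⟨?_, fun S ↦ ⟨?_, IsStandardCyclic.isMaxInfCyclic hp⟩⟩
  · rintro C ⟨g, rfl⟩ hinf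
    obtain ⟨D, hD, hle⟩ := exists_isStandardCyclic_le hp hinf
    exact ⟨D, hD.isMaxInfCyclic hp, hle⟩
  · rintro ⟨⟨g, rfl⟩, hinf, hmax⟩
    obtain ⟨D, hD, hle⟩ := exists_isStandardCyclic_le hp hinf
    have hDmax := hD.isMaxInfCyclic hp
    rwa [hmax D hDmax.1 hDmax.2.1 hle]
end

section
/- Let G be a group extension 1 → A → G → Q → 1 with A finitely generated free abelian, Q finite. Declare two infinite virtually cyclic subgroups V₁, V₂ ≤ G equivalent if (A ∩ V₁)^max = (A ∩ V₂)^max, where C^max denotes the unique maximal infinite cyclic subgroup of A containing an infinite cyclic subgroup C ≤ A. Then this is a well-defined equivalence relation on the set of infinite virtually cyclic subgroups of G: in particular, for every infinite virtually cyclic subgroup V ≤ G, the intersection A ∩ V is infinite cyclic (hence (A∩V)^max is defined). -/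
/-!
In the torsion-free abelian group `A` the power map `x ↦ x ^ n` is injective, so a subgroup of `A`
whose `n`-th powers all lie in a cyclic group is cyclic. If `⟨c⟩` has index `k` in `V`, then
`x ^ k! ∈ ⟨c⟩` for every `x ∈ V`; hence `A ∩ V` is cyclic, and it is infinite because `A` has
finite index. For infinite cyclic `C ≤ A`, the elements of `A` with a positive power in `C` form a
subgroup (the isolator of `C`), cyclic because `A` is finitely generated, which contains every
cyclic subgroup of `A` containing `C`: it is the unique `C^max`. The relation "`A ∩ V₁` and
`A ∩ V₂` have the same `C^max`" is then an equivalence.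
-/

/-- An infinite cyclic subgroup. -/
def IsInfCyc {G : Type*} [Group G] (C : Subgroup G) : Prop :=
  (∃ g, C = Subgroup.zpowers g) ∧ (C : Set G).Infinite

/-- An infinite virtually cyclic subgroup: infinite, with a cyclic subgroup of
finite index. -/
def IsInfVirtCyc {G : Type*} [Group G] (V : Subgroup G) : Prop :=
  (V : Set G).Infinite ∧ ∃ c ∈ V, (Subgroup.zpowers c).relIndex V ≠ 0

/-- `M` is a maximal infinite cyclic subgroup of the subgroup `A`. -/
def IsMaxInfCycIn {G : Type*} [Group G] (A M : Subgroup G) : Prop :=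
  M ≤ A ∧ IsInfCyc M ∧ ∀ D, D ≤ A → IsInfCyc D → M ≤ D → M = D

open Subgroup

theorem Subgroup.infinite_inf_of_relIndex_ne_zero {G : Type*} [Group G] {H V : Subgroup G}
    (hV : (V : Set G).Infinite) (h : H.relIndex V ≠ 0) :
    ((H ⊓ V : Subgroup G) : Set G).Infinite := by
  intro hfin
  have : Finite (H ⊓ V : Subgroup G) := hfin.to_subtype
  have : Finite (H.subgroupOf V) :=
    Finite.of_injective (fun x => (⟨x.1.1, x.2, x.1.2⟩ : (H ⊓ V : Subgroup G)))
      fun x y hxy => by ext; exact (congrArg Subtype.val hxy :)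
  have : (H.subgroupOf V).FiniteIndex := ⟨h⟩
  have : Finite V := (finite_iff_finite_and_finiteIndex (H := H.subgroupOf V)).mpr ⟨‹_›, ‹_›⟩
  exact hV (Set.toFinite _)

theorem equivalence_of_existsUnique {α β : Type*} {P : β → Prop} {R : α → β → Prop}
    (h : ∀ a, ∃! b, P b ∧ R a b) : Equivalence fun a a' => ∃ b, P b ∧ R a b ∧ R a' b where
  refl a := let ⟨b, ⟨hb, hab⟩, _⟩ := h a; ⟨b, hb, hab, hab⟩
  symm := fun ⟨b, hb, hab, hab'⟩ => ⟨b, hb, hab', hab⟩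
  trans := fun ⟨b, hb, hab, hbb⟩ ⟨_, hc, hbc, hcc⟩ =>
    ⟨b, hb, hab, (h _).unique ⟨hb, hbb⟩ ⟨hc, hbc⟩ ▸ hcc⟩

theorem isInfCyc_iff {G : Type*} [Group G] {C : Subgroup G} :
    IsInfCyc C ↔ IsCyclic C ∧ (C : Set G).Infinite := by
  simp only [IsInfCyc, Subgroup.isCyclic_iff_exists_zpowers_eq_top, eq_comm]

theorem IsInfCyc.ne_bot {G : Type*} [Group G] {C : Subgroup G} (hC : IsInfCyc C) : C ≠ ⊥ :=
  fun hbot => hC.2 (by simp [hbot])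

section TorsionFreeAbelian

variable {G : Type*} [Group G] {A : Subgroup G}

theorem eq_of_pow_eq_pow_of_mem (hcomm : ∀ a b : G, a ∈ A → b ∈ A → a * b = b * a)
    (htf : ∀ a ∈ A, a ≠ 1 → ∀ n : ℕ, 0 < n → a ^ n ≠ 1)
    {a b : G} (ha : a ∈ A) (hb : b ∈ A) {n : ℕ} (hn : 0 < n) (h : a ^ n = b ^ n) : a = b := by
  by_contra hne
  refine htf _ (A.mul_mem ha (A.inv_mem hb)) (mul_inv_eq_one.not.mpr hne) n hn ?_
  rw [Commute.mul_pow (hcomm a b⁻¹ ha (A.inv_mem hb)), inv_pow, h, mul_inv_cancel]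

/-- `x ↦ x ^ n` is an injective homomorphism from `H` into `K`. -/
theorem isCyclic_of_pow_mem (hcomm : ∀ a b : G, a ∈ A → b ∈ A → a * b = b * a)
    (htf : ∀ a ∈ A, a ≠ 1 → ∀ n : ℕ, 0 < n → a ^ n ≠ 1)
    {H K : Subgroup G} [IsCyclic K] (hHA : H ≤ A) {n : ℕ} (hn : 0 < n)
    (hpow : ∀ x ∈ H, x ^ n ∈ K) : IsCyclic H := by
  let f : H →* K :=
    { toFun := fun x => ⟨x ^ n, hpow x x.2⟩
      map_one' := Subtype.ext (one_pow n)
      map_mul' := fun x y => Subtype.ext <|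
        Commute.mul_pow (hcomm x y (hHA x.2) (hHA y.2)) n }
  refine isCyclic_of_injective f fun x y hxy => Subtype.ext ?_
  exact eq_of_pow_eq_pow_of_mem hcomm htf (hHA x.2) (hHA y.2) hn (congrArg Subtype.val hxy)

theorem Subgroup.pow_natAbs_mem_iff {H : Subgroup G} {x : G} {k : ℤ} :
    x ^ k.natAbs ∈ H ↔ x ^ k ∈ H := by
  cases k <;> simp

theorem Subgroup.fg_of_le_of_comm (hcomm : ∀ a b : G, a ∈ A → b ∈ A → a * b = b * a)
    (hfg : Group.FG A) {H : Subgroup G} (hHA : H ≤ A) : H.FG := by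
  classical
  let _ : CommGroup A :=
    { (inferInstance : Group A) with mul_comm := fun a b => Subtype.ext (hcomm a b a.2 b.2) }
  have : Module.Finite ℤ (Additive A) := Module.Finite.iff_addGroup_fg.mpr inferInstance
  have hfg' : (H.subgroupOf A).FG :=
    (Subgroup.fg_iff_add_fg _).mpr <| (Submodule.fg_iff_addSubgroup_fg _).mp <|
      IsNoetherian.noetherian (AddSubgroup.toIntSubmodule (H.subgroupOf A).toAddSubgroup)
  obtain ⟨T, hT⟩ := hfg'
  refine ⟨T.image A.subtype, ?_⟩
  rw [Finset.coe_image, ← MonoidHom.map_closure, hT, subgroupOf_map_subtype, inf_of_le_left hHA]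

/-- The elements of `A` having a positive power in `C`; for infinite cyclic `C ≤ A` this is
`C^max`. -/
def isolator (hcomm : ∀ a b : G, a ∈ A → b ∈ A → a * b = b * a) (C : Subgroup G) :
    Subgroup G where
  carrier := {x | x ∈ A ∧ ∃ n : ℕ, 0 < n ∧ x ^ n ∈ C}
  one_mem' := ⟨A.one_mem, 1, one_pos, by rw [one_pow]; exact C.one_mem⟩
  mul_mem' := by
    rintro x y ⟨hxA, m, hm, hxm⟩ ⟨hyA, l, hl, hyl⟩
    refine ⟨A.mul_mem hxA hyA, m * l, Nat.mul_pos hm hl, ?_⟩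
    rw [Commute.mul_pow (hcomm x y hxA hyA), pow_mul, mul_comm m l, pow_mul]
    exact C.mul_mem (pow_mem hxm l) (pow_mem hyl m)
  inv_mem' := by
    rintro x ⟨hxA, m, hm, hxm⟩
    exact ⟨A.inv_mem hxA, m, hm, by rw [inv_pow]; exact C.inv_mem hxm⟩

section Isolator

variable (hcomm : ∀ a b : G, a ∈ A → b ∈ A → a * b = b * a) {C : Subgroup G}

theorem isolator_le : isolator hcomm C ≤ A := fun _ hx => hx.1

theorem le_isolator (hCA : C ≤ A) : C ≤ isolator hcomm C :=
  fun x hx => ⟨hCA hx, 1, one_pos, by rwa [pow_one]⟩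

theorem zpowers_le_isolator {e : G} (he : zpowers e ≤ A) (hCe : C ≤ zpowers e) (hC : C ≠ ⊥) :
    zpowers e ≤ isolator hcomm C := by
  obtain ⟨w, hwC, hw⟩ := C.bot_or_exists_ne_one.resolve_left hC
  obtain ⟨k, rfl⟩ := mem_zpowers_iff.mp (hCe hwC)
  have hk : k ≠ 0 := by rintro rfl; exact hw (zpow_zero e)
  rintro x ⟨i, rfl⟩
  refine ⟨he ⟨i, rfl⟩, k.natAbs, Int.natAbs_pos.mpr hk, pow_natAbs_mem_iff.mpr ?_⟩
  rw [← zpow_mul, mul_comm, zpow_mul]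
  exact zpow_mem hwC i

theorem exists_pow_mem_of_mem_isolator (hfg : Group.FG A) :
    ∃ n : ℕ, 0 < n ∧ ∀ x ∈ isolator hcomm C, x ^ n ∈ C := by
  obtain ⟨T, hT⟩ := Subgroup.fg_of_le_of_comm hcomm hfg (isolator_le hcomm (C := C))
  have hTA : ∀ x ∈ closure (T : Set G), x ∈ A := fun x hx => (hT ▸ hx).1
  choose! f hf0 hfC using fun t (ht : t ∈ T) => (hT ▸ subset_closure ht : t ∈ isolator hcomm C).2
  -- the product of the exponents of finitely many generators works for all of them
  refine ⟨∏ t ∈ T, f t, Finset.prod_pos hf0, fun x hx => ?_⟩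
  rw [← hT] at hx
  induction hx using closure_induction with
  | mem t ht =>
    obtain ⟨k, hk⟩ := Finset.dvd_prod_of_mem f ht
    rw [hk, pow_mul]
    exact pow_mem (hfC t ht) k
  | one => rw [one_pow]; exact C.one_mem
  | mul x y hx hy hxC hyC =>
    rw [Commute.mul_pow (hcomm x y (hTA x hx) (hTA y hy))]
    exact C.mul_mem hxC hyC
  | inv x _ hxC => rw [inv_pow]; exact C.inv_mem hxC

theorem isCyclic_isolator (htf : ∀ a ∈ A, a ≠ 1 → ∀ n : ℕ, 0 < n → a ^ n ≠ 1)
    (hfg : Group.FG A) [IsCyclic C] : IsCyclic (isolator hcomm C) := by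
  obtain ⟨n, hn, hpow⟩ := exists_pow_mem_of_mem_isolator hcomm hfg (C := C)
  exact isCyclic_of_pow_mem hcomm htf (isolator_le hcomm) hn hpow

end Isolator

theorem isMaxInfCycIn_isolator (hcomm : ∀ a b : G, a ∈ A → b ∈ A → a * b = b * a)
    (htf : ∀ a ∈ A, a ≠ 1 → ∀ n : ℕ, 0 < n → a ^ n ≠ 1) (hfg : Group.FG A)
    {C : Subgroup G} (hC : IsInfCyc C) (hCA : C ≤ A) : IsMaxInfCycIn A (isolator hcomm C) := by
  obtain ⟨hCcyc, hCinf⟩ := isInfCyc_iff.mp hC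
  refine ⟨isolator_le hcomm, isInfCyc_iff.mpr ⟨isCyclic_isolator hcomm htf hfg,
    hCinf.mono (le_isolator hcomm hCA)⟩, ?_⟩
  rintro D hDA ⟨⟨d, rfl⟩, -⟩ hMD
  exact le_antisymm hMD
    (zpowers_le_isolator hcomm hDA ((le_isolator hcomm hCA).trans hMD) hC.ne_bot)

theorem existsUnique_isMaxInfCycIn (hcomm : ∀ a b : G, a ∈ A → b ∈ A → a * b = b * a)
    (htf : ∀ a ∈ A, a ≠ 1 → ∀ n : ℕ, 0 < n → a ^ n ≠ 1) (hfg : Group.FG A)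
    {C : Subgroup G} (hC : IsInfCyc C) (hCA : C ≤ A) :
    ∃! M : Subgroup G, IsMaxInfCycIn A M ∧ C ≤ M := by
  have hmax := isMaxInfCycIn_isolator hcomm htf hfg hC hCA
  refine ⟨isolator hcomm C, ⟨hmax, le_isolator hcomm hCA⟩, ?_⟩
  rintro M ⟨⟨hMA, ⟨⟨m, rfl⟩, -⟩, hMmax⟩, hCM⟩
  exact hMmax _ (isolator_le hcomm) hmax.2.1 (zpowers_le_isolator hcomm hMA hCM hC.ne_bot)

theorem isInfCyc_inf_of_isInfVirtCyc (hcomm : ∀ a b : G, a ∈ A → b ∈ A → a * b = b * a)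
    (htf : ∀ a ∈ A, a ≠ 1 → ∀ n : ℕ, 0 < n → a ^ n ≠ 1) [A.FiniteIndex]
    {V : Subgroup G} (hV : IsInfVirtCyc V) : IsInfCyc (A ⊓ V) := by
  obtain ⟨hVinf, c, -, hc⟩ := hV
  have := isFiniteRelIndex_of_finiteIndex (H := A) (K := V)
  refine isInfCyc_iff.mpr ⟨?_, infinite_inf_of_relIndex_ne_zero hVinf relIndex_ne_zero⟩
  -- every `x ∈ V` has a power `x ^ m ∈ zpowers c` with `0 < m ≤ k := (zpowers c).relIndex V`,
  -- and all such `m` divide `k!`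
  refine isCyclic_of_pow_mem hcomm htf (K := zpowers c) inf_le_left
    (Nat.factorial_pos ((zpowers c).relIndex V)) fun x hx => ?_
  exact (pow_mem_of_relIndex_ne_zero_of_dvd hc hx.2
    fun m hm hle => Nat.dvd_factorial hm hle).1

end TorsionFreeAbelian

theorem stmt15_general (G : Type*) [Group G] (A : Subgroup G)
    (hcomm : ∀ a b : G, a ∈ A → b ∈ A → a * b = b * a)
    (hfg : Group.FG A)
    (htf : ∀ a ∈ A, a ≠ 1 → ∀ n : ℕ, 0 < n → a ^ n ≠ 1)
    (hQ : Finite (G ⧸ A)) :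
    (∀ V : Subgroup G, IsInfVirtCyc V →
      IsInfCyc (A ⊓ V) ∧ ∃! M : Subgroup G, IsMaxInfCycIn A M ∧ A ⊓ V ≤ M) ∧
    Equivalence (fun V₁ V₂ : {V : Subgroup G // IsInfVirtCyc V} =>
      ∃ M, IsMaxInfCycIn A M ∧ A ⊓ V₁.1 ≤ M ∧ A ⊓ V₂.1 ≤ M) := by
  have : A.FiniteIndex := finiteIndex_iff_finite_quotient.mpr hQ
  have key : ∀ V : Subgroup G, IsInfVirtCyc V →
      IsInfCyc (A ⊓ V) ∧ ∃! M : Subgroup G, IsMaxInfCycIn A M ∧ A ⊓ V ≤ M := fun V hV =>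
    have hAV := isInfCyc_inf_of_isInfVirtCyc hcomm htf hV
    ⟨hAV, existsUnique_isMaxInfCycIn hcomm htf hfg hAV inf_le_left⟩
  exact ⟨key, equivalence_of_existsUnique fun V => (key V.1 V.2).2⟩

/-- for `1 → A → G → Q → 1` with `A` finitely generated free
abelian and `Q` finite, every infinite virtually cyclic `V ≤ G` has `A ∩ V`
infinite cyclic, with a unique maximal infinite cyclic `(A ∩ V)^max ≤ A`
containing it; and "`(A ∩ V₁)^max = (A ∩ V₂)^max`" is a well-defined
equivalence relation on infinite virtually cyclic subgroups. -/
theorem stmt15 (G : Type*) [Group G] (A : Subgroup G) [A.Normal]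
    (hcomm : ∀ a b : G, a ∈ A → b ∈ A → a * b = b * a)
    (hfg : Group.FG A)
    (htf : ∀ a ∈ A, a ≠ 1 → ∀ n : ℕ, 0 < n → a ^ n ≠ 1)
    (hQ : Finite (G ⧸ A)) :
    (∀ V : Subgroup G, IsInfVirtCyc V →
      IsInfCyc (A ⊓ V) ∧ ∃! M : Subgroup G, IsMaxInfCycIn A M ∧ A ⊓ V ≤ M) ∧
    Equivalence (fun V₁ V₂ : {V : Subgroup G // IsInfVirtCyc V} =>
      ∃ M, IsMaxInfCycIn A M ∧ A ⊓ V₁.1 ≤ M ∧ A ⊓ V₂.1 ≤ M) :=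
  stmt15_general G A hcomm hfg htf hQ
end

section
/- Let G be a group such that every element g ∈ G with g ≠ e generates an infinite cyclic subgroup which is contained in a unique maximal infinite cyclic subgroup, and suppose conjugation permutes maximal infinite cyclic subgroups. If infinitely many maximal infinite cyclic subgroups C_j (j ∈ ℕ) are pairwise non-conjugate but all the C_j are contained in conjugates of a single virtually cyclic subgroup V₀ (i.e., for each j there is g_j with g_j C_j g_j⁻¹ ≤ V₀), then V₀ contains infinitely many pairwise distinct maximal infinite cyclic subgroups — contradicting that a virtually cyclic group has only finitely many maximal infinite cyclic subgroups. Hence: if a group G that is hyperbolic-like in the sense of containing infinitely many conjugacy classes of maximal infinite cyclic subgroups has the unique-maximal-containment property, then G contains infinitely many conjugacy classes of maximal infinite virtually cyclic subgroups. -/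
/-- A maximal infinite cyclic subgroup of `G`. -/
def IsMaxInfCycSub {G : Type*} [Group G] (C : Subgroup G) : Prop :=
  IsInfCyc C ∧ ∀ D : Subgroup G, IsInfCyc D → C ≤ D → C = D

/-- A maximal infinite virtually cyclic subgroup of `G`. -/
def IsMaxInfVC {G : Type*} [Group G] (M : Subgroup G) : Prop :=
  IsInfVirtCyc M ∧ ∀ V : Subgroup G, IsInfVirtCyc V → M ≤ V → M = V

/-- The conjugate subgroup `gCg⁻¹`. -/
def ConjSubgroup {G : Type*} [Group G] (g : G) (C : Subgroup G) : Subgroup G :=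
  C.map (MulAut.conj g).toMonoidHom

/-!
Choose for every `f n` a maximal infinite virtually cyclic `M n ≥ f n`. If `M k` is conjugate to
`M x`, then a conjugate of `f k` is a maximal infinite cyclic subgroup of `M x`, and different
indices `k` give different such subgroups because the `f k` are pairwise non-conjugate. So each
conjugacy class among the `M n` occurs for only finitely many `n`, and infinitely many indices
force infinitely many classes.
-/

open Pointwise

theorem Setoid.exists_seq_pairwise_not_rel {ι : Type*} [Infinite ι] (r : Setoid ι)
    (hr : ∀ x, {y | r y x}.Finite) : ∃ a : ℕ → ι, Pairwise fun m n => ¬ r (a m) (a n) := by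
  have : Infinite (Quotient r) := by
    refine Set.infinite_univ_iff.mp fun hfin => Set.infinite_univ (α := ι) ?_
    refine hfin.preimage' (f := Quotient.mk r) fun q _ => q.inductionOn fun x => ?_
    simpa only [Set.preimage, Set.mem_singleton_iff, Quotient.eq] using hr x
  let e := Infinite.natEmbedding (Quotient r)
  refine ⟨fun n => (e n).out, fun m n hmn hrel => hmn (e.injective ?_)⟩
  rw [← Quotient.out_eq (e m), ← Quotient.out_eq (e n)]
  exact Quotient.sound hrel

section

variable {G : Type*} [Group G]

def maxInfCycIn (V : Subgroup G) : Set (Subgroup G) :=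
  {C | C ≤ V ∧ IsInfCyc C ∧ ∀ D, D ≤ V → IsInfCyc D → C ≤ D → C = D}

theorem IsMaxInfCycSub.mem_maxInfCycIn {C V : Subgroup G} (hC : IsMaxInfCycSub C) (hCV : C ≤ V) :
    C ∈ maxInfCycIn V :=
  ⟨hCV, hC.1, fun D _ hD hCD => hC.2 D hD hCD⟩

variable {α : Type*} [Group α] [MulDistribMulAction α G]

theorem IsInfCyc.smul {C : Subgroup G} (hC : IsInfCyc C) (a : α) : IsInfCyc (a • C) := by
  obtain ⟨⟨c, rfl⟩, hinf⟩ := hC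
  refine ⟨⟨a • c, MonoidHom.map_zpowers _ c⟩, ?_⟩
  rw [Subgroup.coe_pointwise_smul]
  exact hinf.smul_set

theorem IsMaxInfCycSub.smul {C : Subgroup G} (hC : IsMaxInfCycSub C) (a : α) :
    IsMaxInfCycSub (a • C) := by
  refine ⟨hC.1.smul a, fun D hD hCD => ?_⟩
  rw [hC.2 _ (hD.smul a⁻¹) (Subgroup.pointwise_smul_subset_iff.mp hCD), smul_inv_smul]

theorem finite_setOf_exists_smul_le {ι : Type*} {f : ι → Subgroup G}
    (hf : ∀ i, IsMaxInfCycSub (f i)) (hf_orbit : Pairwise fun i j => ∀ a : α, a • f i ≠ f j)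
    {V : Subgroup G} (hV : (maxInfCycIn V).Finite) : {i | ∃ a : α, a • f i ≤ V}.Finite := by
  choose! a ha using fun i (hi : i ∈ {i | ∃ a : α, a • f i ≤ V}) => hi
  refine Set.Finite.of_finite_image (f := fun i => a i • f i) (hV.subset ?_) fun i hi j hj hij => ?_
  · rintro _ ⟨i, hi, rfl⟩
    exact ((hf i).smul (a i)).mem_maxInfCycIn (ha i hi)
  · by_contra hne
    exact hf_orbit hne ((a j)⁻¹ * a i) <| by
      rw [mul_smul, show a i • f i = a j • f j from hij, inv_smul_smul]

end

/-- if (1) every maximal infinite cyclic subgroup is contained in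
a unique maximal infinite virtually cyclic subgroup, (2) every infinite
virtually cyclic subgroup contains only finitely many maximal infinite cyclic
subgroups, and (3) there are infinitely many conjugacy classes of maximal
infinite cyclic subgroups, then there are infinitely many conjugacy classes of
maximal infinite virtually cyclic subgroups. -/
theorem stmt18 (G : Type*) [Group G]
    (h1 : ∀ C : Subgroup G, IsMaxInfCycSub C → ∃! M, IsMaxInfVC M ∧ C ≤ M)
    (h2 : ∀ V : Subgroup G, IsInfVirtCyc V →
      {C : Subgroup G | C ≤ V ∧ IsInfCyc C ∧
        ∀ D, D ≤ V → IsInfCyc D → C ≤ D → C = D}.Finite)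
    (h3 : ∃ f : ℕ → Subgroup G, (∀ n, IsMaxInfCycSub (f n)) ∧
      ∀ m n : ℕ, m ≠ n → ∀ g : G, ConjSubgroup g (f m) ≠ f n) :
    ∃ F : ℕ → Subgroup G, (∀ n, IsMaxInfVC (F n)) ∧
      ∀ m n : ℕ, m ≠ n → ∀ g : G, ConjSubgroup g (F m) ≠ F n := by
  obtain ⟨f, hf, hf_orbit⟩ := h3
  choose M hM using fun n => (h1 (f n) (hf n)).exists
  let r := Setoid.comap M (MulAction.orbitRel (ConjAct G) (Subgroup G))
  have hr : ∀ x, {y | r y x}.Finite := fun x =>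
    (finite_setOf_exists_smul_le hf (fun m n hmn a => hf_orbit m n hmn (ConjAct.ofConjAct a))
      (h2 (M x) (hM x).1.1)).subset fun y ⟨a, ha⟩ =>
        ⟨a⁻¹, Subgroup.subset_pointwise_smul_iff.mp ((hM y).2.trans_eq ha.symm)⟩
  obtain ⟨a, ha⟩ := r.exists_seq_pairwise_not_rel hr
  exact ⟨M ∘ a, fun n => (hM (a n)).1, fun m n hmn g hg => ha hmn.symm ⟨ConjAct.toConjAct g, hg⟩⟩
end
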